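/- Let φ, κ be positive reals with φ ≥ 1, and set m = φ·log₂(κ) and n'' = log₂(κ)/φ (assume these are positive integers and n'' ≤ m). Then C(m, n'') ≤ κ^( log₂(e)·(2/e + 1/φ) ). -/

import Mathlib

/-!
Since `M = N φ²`, the estimate `C(M, N) ≤ (e M / N)^N` gives `C(M, N) ≤ (e φ²)^N`. Bounding
`log φ ≤ φ / e` (the tangent line of `log` at `e`) turns this into `exp (N (1 + 2φ/e))`, and
because `log₂ κ = N φ` this is exactly `κ^(log₂ e · (2/e + 1/φ))`.
-/

open Real

lemma Real.log_le_div_exp_one {x : ℝ} (hx : 0 < x) : log x ≤ x / exp 1 := by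
  have h := log_le_sub_one_of_pos (div_pos hx (exp_pos 1))
  rw [log_div hx.ne' (exp_pos 1).ne', log_exp] at h
  linarith

lemma Nat.choose_le_exp_one_mul_div_pow (n k : ℕ) :
    (n.choose k : ℝ) ≤ (exp 1 * n / k) ^ k := by
  obtain rfl | hk := k.eq_zero_or_pos
  · simp
  have hk' : (0 : ℝ) < k := mod_cast hk
  have hfact : (0 : ℝ) < k.factorial := mod_cast k.factorial_pos
  -- `k^k / k! ≤ e^k` is one term of the series of `exp k`.
  have hkpow : (k : ℝ) ^ k ≤ exp 1 ^ k * k.factorial := by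
    rw [← exp_nat_mul, mul_one, ← div_le_iff₀ hfact]
    exact pow_div_factorial_le_exp _ hk'.le k
  calc (n.choose k : ℝ) ≤ (n : ℝ) ^ k / k.factorial := choose_le_pow_div k n
    _ ≤ (exp 1 * n / k) ^ k := by
      rw [div_pow, mul_pow, div_le_div_iff₀ hfact (by positivity)]
      calc (n : ℝ) ^ k * k ^ k ≤ n ^ k * (exp 1 ^ k * k.factorial) := by gcongr
        _ = exp 1 ^ k * n ^ k * k.factorial := by ring

lemma Real.exp_one_mul_sq_le {x : ℝ} (hx : 0 < x) :
    exp 1 * x ^ 2 ≤ exp (1 + 2 * x / exp 1) := by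
  calc exp 1 * x ^ 2 = exp (1 + 2 * log x) := by
        rw [exp_add, mul_comm 2, exp_mul, exp_log hx, rpow_two]
    _ ≤ exp (1 + 2 * x / exp 1) := by
        gcongr
        rw [mul_div_assoc]
        linarith [log_le_div_exp_one hx]

theorem subcommittee_count_poly_general (φ κ : ℝ) (hφ : 1 ≤ φ) (hκ : 0 < κ)
    (M N : ℕ) (hM : (M : ℝ) = φ * Real.logb 2 κ) (hN : (N : ℝ) = Real.logb 2 κ / φ) :
    (Nat.choose M N : ℝ) ≤ κ ^ (Real.logb 2 (Real.exp 1) * (2 / Real.exp 1 + 1 / φ)) := by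
  have hφ0 : 0 < φ := one_pos.trans_le hφ
  have hlogb : logb 2 κ = N * φ := by rw [hN]; field_simp
  have hchoose : (M.choose N : ℝ) ≤ (exp 1 * φ ^ 2) ^ N := by
    obtain rfl | hN0 := N.eq_zero_or_pos
    · simp
    have hN0' : (N : ℝ) ≠ 0 := mod_cast hN0.ne'
    convert M.choose_le_exp_one_mul_div_pow N using 2
    rw [hM, hlogb]
    field_simp
  have hκpow : κ ^ (logb 2 (exp 1) * (2 / exp 1 + 1 / φ)) = exp (1 + 2 * φ / exp 1) ^ N := by
    have hlogκ : log κ = N * φ * log 2 := by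
      rw [← hlogb, logb, div_mul_cancel₀ _ (log_pos one_lt_two).ne']
    rw [rpow_def_of_pos hκ, hlogκ, logb, log_exp, ← exp_nat_mul]
    congr 1
    field_simp
    ring
  calc (M.choose N : ℝ) ≤ (exp 1 * φ ^ 2) ^ N := hchoose
    _ ≤ exp (1 + 2 * φ / exp 1) ^ N := by gcongr; exact exp_one_mul_sq_le hφ0
    _ = _ := hκpow.symm

/-- Claim `par_poly`: with `m = φ·log₂ κ` and `n'' = log₂(κ)/φ` positive integers,
`C(m, n'') ≤ κ^(log₂(e)·(2/e + 1/φ))`. -/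
theorem subcommittee_count_poly (φ κ : ℝ) (hφ : 1 ≤ φ) (hκ : 0 < κ)
    (M N : ℕ) (hM : (M : ℝ) = φ * Real.logb 2 κ) (hN : (N : ℝ) = Real.logb 2 κ / φ)
    (hNpos : 0 < N) (hNM : N ≤ M) :
    (Nat.choose M N : ℝ) ≤ κ ^ (Real.logb 2 (Real.exp 1) * (2 / Real.exp 1 + 1 / φ)) :=
  subcommittee_count_poly_general φ κ hφ hκ M N hM hN
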